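/- For an n-qubit independent error where each qubit is disturbed with the normal distribution with parameter σ, the variance of the disturbed state is V(Ψ) = 2 - 2σⁿ. -/

import Mathlib

/-!
With `D θ = 1 + σ² - 2σ cos θ`, the integrand `(1 - σ²) cos θ sin² θ / D θ ²` has, for `σ ≠ 0`, the
elementary antiderivative `poissonAntideriv σ` below, whose arctangent term comes from
`d/dθ arctan (σ sin θ / (1 - σ cos θ)) = (σ cos θ - σ²) / D θ`. Every term but the linear one
vanishes at `0` and `π`, so `∫₀^π (1 - σ²) cos θ sin² θ / D θ ² = π σ / 2`; the normalisation
`4π / (2π²)` turns this into `σ`, the single-qubit factor of the variance.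
-/

open Real

theorem one_sub_mul_cos_pos {σ : ℝ} (hσ : |σ| < 1) (θ : ℝ) : 0 < 1 - σ * cos θ := by
  have : σ * cos θ ≤ |σ| := calc
    σ * cos θ ≤ |σ * cos θ| := le_abs_self _
    _ = |σ| * |cos θ| := abs_mul _ _
    _ ≤ |σ| := mul_le_of_le_one_right (abs_nonneg σ) (abs_cos_le_one θ)
  linarith

theorem one_add_sq_sub_two_mul_cos_eq (σ θ : ℝ) :
    1 + σ ^ 2 - 2 * σ * cos θ = (1 - σ * cos θ) ^ 2 + (σ * sin θ) ^ 2 := by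
  linear_combination -σ ^ 2 * sin_sq_add_cos_sq θ

theorem one_add_sq_sub_two_mul_cos_pos {σ : ℝ} (hσ : |σ| < 1) (θ : ℝ) :
    0 < 1 + σ ^ 2 - 2 * σ * cos θ := by
  rw [one_add_sq_sub_two_mul_cos_eq]
  have := one_sub_mul_cos_pos hσ θ
  positivity

theorem hasDerivAt_arctan_mul_sin_div {σ : ℝ} (hσ : |σ| < 1) (θ : ℝ) :
    HasDerivAt (fun x => arctan (σ * sin x / (1 - σ * cos x)))
      ((σ * cos θ - σ ^ 2) / (1 + σ ^ 2 - 2 * σ * cos θ)) θ := by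
  have hden := one_sub_mul_cos_pos hσ θ
  have hD := one_add_sq_sub_two_mul_cos_pos hσ θ
  have hquot : HasDerivAt (fun x => σ * sin x / (1 - σ * cos x))
      ((σ * cos θ * (1 - σ * cos θ) - σ * sin θ * (σ * sin θ)) / (1 - σ * cos θ) ^ 2) θ := by
    have hcos : HasDerivAt (fun x => 1 - σ * cos x) (σ * sin θ) θ := by
      simpa using ((hasDerivAt_cos θ).const_mul σ).const_sub 1
    exact ((hasDerivAt_sin θ).const_mul σ).div hcos hden.ne'
  have hsq_add : 1 + (σ * sin θ / (1 - σ * cos θ)) ^ 2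
      = (1 + σ ^ 2 - 2 * σ * cos θ) / (1 - σ * cos θ) ^ 2 := by
    rw [one_add_sq_sub_two_mul_cos_eq]
    field_simp
  have hnum : σ * cos θ * (1 - σ * cos θ) - σ * sin θ * (σ * sin θ) = σ * cos θ - σ ^ 2 := by
    linear_combination -σ ^ 2 * sin_sq_add_cos_sq θ
  refine ((hasDerivAt_arctan _).comp θ hquot).congr_deriv ?_
  rw [hnum, hsq_add]
  field_simp

noncomputable def poissonAntideriv (σ x : ℝ) : ℝ :=
  σ / 2 * x + (1 + σ ^ 4) / (2 * σ ^ 3) * arctan (σ * sin x / (1 - σ * cos x))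
    + ((σ ^ 4 - 1) / (2 * σ ^ 2) * sin x + (1 - σ ^ 2) / (2 * σ) * (sin x * cos x))
      / (1 + σ ^ 2 - 2 * σ * cos x)

theorem hasDerivAt_poissonAntideriv {σ : ℝ} (hσ0 : σ ≠ 0) (hσ : |σ| < 1) (θ : ℝ) :
    HasDerivAt (poissonAntideriv σ)
      ((1 - σ ^ 2) * cos θ * sin θ ^ 2 / (1 + σ ^ 2 - 2 * σ * cos θ) ^ 2) θ := by
  have hD := one_add_sq_sub_two_mul_cos_pos hσ θ
  have hlin : HasDerivAt (fun x : ℝ => σ / 2 * x) (σ / 2) θ := by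
    simpa using (hasDerivAt_id θ).const_mul (σ / 2)
  have harctan := (hasDerivAt_arctan_mul_sin_div hσ θ).const_mul ((1 + σ ^ 4) / (2 * σ ^ 3))
  have hnum : HasDerivAt
      (fun x => (σ ^ 4 - 1) / (2 * σ ^ 2) * sin x + (1 - σ ^ 2) / (2 * σ) * (sin x * cos x))
      ((σ ^ 4 - 1) / (2 * σ ^ 2) * cos θ
        + (1 - σ ^ 2) / (2 * σ) * (cos θ * cos θ + sin θ * -sin θ)) θ :=
    ((hasDerivAt_sin θ).const_mul _).add
      (((hasDerivAt_sin θ).mul (hasDerivAt_cos θ)).const_mul _)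
  have hden : HasDerivAt (fun x => 1 + σ ^ 2 - 2 * σ * cos x) (2 * σ * sin θ) θ := by
    simpa using ((hasDerivAt_cos θ).const_mul (2 * σ)).const_sub (1 + σ ^ 2)
  refine ((hlin.add harctan).add (hnum.div hden hD.ne')).congr_deriv ?_
  have hD' : 1 + σ ^ 2 - σ * 2 * cos θ ≠ 0 := by linarith
  field_simp
  rw [sin_sq]
  ring

theorem integral_cos_mul_sin_sq_div_poisson_sq {σ : ℝ} (hσ : |σ| < 1) :
    ∫ θ in (0 : ℝ)..π, (1 - σ ^ 2) * cos θ * sin θ ^ 2 / (1 + σ ^ 2 - 2 * σ * cos θ) ^ 2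
      = π * σ / 2 := by
  have hint : IntervalIntegrable
      (fun θ => (1 - σ ^ 2) * cos θ * sin θ ^ 2 / (1 + σ ^ 2 - 2 * σ * cos θ) ^ 2)
      MeasureTheory.volume 0 π :=
    (Continuous.div (by fun_prop) (by fun_prop) fun θ =>
      (pow_pos (one_add_sq_sub_two_mul_cos_pos hσ θ) 2).ne').intervalIntegrable 0 π
  rcases eq_or_ne σ 0 with rfl | hσ0
  · have hderiv (θ : ℝ) : HasDerivAt (fun x => sin x ^ 3 / 3)
        ((1 - (0 : ℝ) ^ 2) * cos θ * sin θ ^ 2 / (1 + (0 : ℝ) ^ 2 - 2 * 0 * cos θ) ^ 2) θ :=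
      (((hasDerivAt_sin θ).pow 3).div_const 3).congr_deriv (by ring)
    rw [intervalIntegral.integral_eq_sub_of_hasDerivAt (fun θ _ => hderiv θ) hint]
    simp
  · rw [intervalIntegral.integral_eq_sub_of_hasDerivAt
      (fun θ _ => hasDerivAt_poissonAntideriv hσ0 hσ θ) hint]
    simp [poissonAntideriv]
    ring

theorem variance_normal_n_qubit (σ : ℝ) (hσ : σ ∈ Set.Ico (0:ℝ) 1) (n : ℕ) :
    2 - 2 * (4 * π * ∫ θ₀ in (0:ℝ)..π,
        ((1 / (2 * π ^ 2)) * (1 - σ ^ 2) / (1 + σ ^ 2 - 2 * σ * Real.cos θ₀) ^ 2) *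
          Real.cos θ₀ * Real.sin θ₀ ^ 2) ^ n = 2 - 2 * σ ^ n := by
  have habs : |σ| < 1 := abs_lt.mpr ⟨by linarith [hσ.1], hσ.2⟩
  have hsingle : 4 * π * ∫ θ₀ in (0:ℝ)..π,
      ((1 / (2 * π ^ 2)) * (1 - σ ^ 2) / (1 + σ ^ 2 - 2 * σ * cos θ₀) ^ 2) *
        cos θ₀ * sin θ₀ ^ 2 = σ := by
    have hfactor (θ : ℝ) : ((1 / (2 * π ^ 2)) * (1 - σ ^ 2) / (1 + σ ^ 2 - 2 * σ * cos θ) ^ 2) *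
        cos θ * sin θ ^ 2 = 1 / (2 * π ^ 2) *
          ((1 - σ ^ 2) * cos θ * sin θ ^ 2 / (1 + σ ^ 2 - 2 * σ * cos θ) ^ 2) := by
      ring
    simp only [hfactor, intervalIntegral.integral_const_mul,
      integral_cos_mul_sin_sq_div_poisson_sq habs]
    field_simp
    ring
  rw [hsingle]
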